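/- With the notation of the Stokes multiplier theorem: the (i,j) block of the product S_β^{-1} S_{-β} equals δ_{ij}·1 - u_i T_{i+1} T_{i+2} ⋯ T_n v_j for all 1 ≤ i, j ≤ n, where for i = n the product T_{i+1}⋯T_n is the identity. Equivalently, (S_β^{-1} S_{-β})_{ij} = 1_{Φ_i}·δ_{ij} - U_i V_j. -/

import Mathlib

open scoped BigOperators

variable {k : Type*} [Field k] {n : ℕ} {Ψ : Type*}
  [AddCommGroup Ψ] [Module k Ψ] [FiniteDimensional k Ψ]
  {Φ : Fin n → Type*} [∀ i, AddCommGroup (Φ i)] [∀ i, Module k (Φ i)]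
  [∀ i, FiniteDimensional k (Φ i)]

/-- The ordered product (composition) of the endomorphisms `T l` for `l` running through the
finite set `s` in increasing order: for `s = {a₁ < a₂ < ⋯ < a_r}` this is `T a₁ ∘ T a₂ ∘ ⋯ ∘ T a_r`
(the identity if `s` is empty). -/
def orderedProd (T : Fin n → Module.End k Ψ) (s : Finset (Fin n)) : Module.End k Ψ :=
  ((s.sort (· ≤ ·)).map T).prod

/-- The local monodromies `T_i := 1 - v_i u_i` of the quiver `(Ψ, Φ_i, u_i, v_i)`. -/
def quiverT (u : ∀ i, Ψ →ₗ[k] Φ i) (v : ∀ i, Φ i →ₗ[k] Ψ) (i : Fin n) : Module.End k Ψ :=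
  1 - v i ∘ₗ u i

/-- The Stokes multiplier `S_β`: the block upper-unitriangular endomorphism of `⊕ᵢ Φᵢ` with
identity diagonal blocks and `(i,j)` block `u_i ∘ v_j` for `i < j`. -/
def Sbeta (u : ∀ i, Ψ →ₗ[k] Φ i) (v : ∀ i, Φ i →ₗ[k] Ψ) :
    Module.End k (∀ i, Φ i) :=
  LinearMap.pi fun i =>
    (LinearMap.proj i : (∀ i, Φ i) →ₗ[k] Φ i) +
      ∑ j, if i < j then (u i ∘ₗ v j) ∘ₗ (LinearMap.proj j) else 0

/-- The block upper-unitriangular endomorphism of `⊕ᵢ Φᵢ` with identity diagonal blocks and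
`(i,j)` block `-u_i T_{i+1} T_{i+2} ⋯ T_{j-1} v_j` for `i < j`. -/
def SbetaInv (u : ∀ i, Ψ →ₗ[k] Φ i) (v : ∀ i, Φ i →ₗ[k] Ψ) :
    Module.End k (∀ i, Φ i) :=
  LinearMap.pi fun i =>
    (LinearMap.proj i : (∀ i, Φ i) →ₗ[k] Φ i) -
      ∑ j, if i < j then
        (u i ∘ₗ (orderedProd (quiverT u v) (Finset.Ioo i j) : Ψ →ₗ[k] Ψ) ∘ₗ v j) ∘ₗ
          (LinearMap.proj j : (∀ l, Φ l) →ₗ[k] Φ j)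
      else 0


/-- The Stokes multiplier `S_{-β}`: the block lower-triangular endomorphism of `⊕ᵢ Φᵢ` with
diagonal blocks `𝕋_i = 1 - u_i v_i` and `(i,j)` block `-u_i ∘ v_j` for `i > j`. -/
def Sminus (u : ∀ i, Ψ →ₗ[k] Φ i) (v : ∀ i, Φ i →ₗ[k] Ψ) :
    Module.End k (∀ i, Φ i) :=
  LinearMap.pi fun i =>
    ((LinearMap.id - u i ∘ₗ v i) ∘ₗ (LinearMap.proj i : (∀ l, Φ l) →ₗ[k] Φ i)) -
      ∑ j, if j < i then (u i ∘ₗ v j) ∘ₗ (LinearMap.proj j : (∀ l, Φ l) →ₗ[k] Φ j) else 0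

/-- `U_i := u_i T_{i+1} T_{i+2} ⋯ T_n : Ψ → Φ_i`. -/
def Ucomp (u : ∀ i, Ψ →ₗ[k] Φ i) (v : ∀ i, Φ i →ₗ[k] Ψ) (i : Fin n) : Ψ →ₗ[k] Φ i :=
  u i ∘ₗ (orderedProd (quiverT u v) (Finset.Ioi i) : Ψ →ₗ[k] Ψ)

/-- `U_Σ = ᵗ(U_1, …, U_n) : Ψ → ⊕ᵢ Φᵢ`. -/
def USigma (u : ∀ i, Ψ →ₗ[k] Φ i) (v : ∀ i, Φ i →ₗ[k] Ψ) : Ψ →ₗ[k] (∀ i, Φ i) :=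
  LinearMap.pi fun i => Ucomp u v i

/-- `V_Σ = (v_1, …, v_n) : ⊕ᵢ Φᵢ → Ψ`. -/
def VSigma (v : ∀ i, Φ i →ₗ[k] Ψ) : (∀ i, Φ i) →ₗ[k] Ψ :=
  ∑ i, v i ∘ₗ (LinearMap.proj i : (∀ l, Φ l) →ₗ[k] Φ i)

/-!
`SbetaInv` is a left inverse of `S_β`, hence (in finite dimension) its inverse. Both this and
the block formula for `SbetaInv * S_{-β}` come down to one telescoping identity: as
`v_m u_m = 1 - T_m`, the partial products `P_m = T_{i+1} ⋯ T_{m-1}` satisfy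
`P_m v_m u_m = P_m - P_{m+1}`, so `∑_{i<m<j} P_m v_m u_m = 1 - T_{i+1} ⋯ T_{j-1}`, also for
`j = n+1`.
-/

theorem sum_apply_pi_single {ι M : Type*} [DecidableEq ι] {β : ι → Type*} [∀ i, Zero (β i)]
    [AddCommMonoid M] (s : Finset ι) (F : ∀ i, β i → M) (hF : ∀ i, F i 0 = 0) (j : ι) (x : β j) :
    ∑ i ∈ s, F i (Pi.single j x i) = if j ∈ s then F j x else 0 := by
  simp_rw [Pi.apply_single F hF, Finset.sum_pi_single']

section OrderedProd

omit [FiniteDimensional k Ψ]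

variable (T : Fin n → Module.End k Ψ)

theorem orderedProd_empty : orderedProd T ∅ = 1 := by
  simp [orderedProd]

theorem orderedProd_insert_of_forall_lt {s : Finset (Fin n)} {a : Fin n} (h : ∀ b ∈ s, b < a) :
    orderedProd T (insert a s) = orderedProd T s * T a := by
  have hsort : (insert a s).sort (· ≤ ·) = s.sort (· ≤ ·) ++ [a] := by
    refine (Finset.sortedLT_sort _).pairwise.eq_of_mem_iff (List.pairwise_append.mpr
      ⟨(Finset.sortedLT_sort s).pairwise, List.pairwise_singleton _ a, ?_⟩) fun b => by
        simp [or_comm]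
    intro b hb c hc
    rw [List.mem_singleton] at hc
    exact hc ▸ h b ((Finset.mem_sort _).mp hb)
  simp [orderedProd, hsort]

theorem sum_orderedProd_filter_lt_mul_one_sub (s : Finset (Fin n)) :
    ∑ m ∈ s, orderedProd T (s.filter (· < m)) * (1 - T m) = 1 - orderedProd T s := by
  induction s using Finset.induction_on_max with
  | empty => simp [orderedProd_empty]
  | insert a s ha ih =>
    have hfilter_a : (insert a s).filter (· < a) = s := by
      ext b
      simp only [Finset.mem_filter, Finset.mem_insert]
      grind
    have hfilter : ∀ m ∈ s, (insert a s).filter (· < m) = s.filter (· < m) := by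
      intro m hm
      ext b
      simp only [Finset.mem_filter, Finset.mem_insert]
      grind
    rw [Finset.sum_insert fun h => lt_irrefl a (ha a h), hfilter_a,
      Finset.sum_congr rfl fun m hm => by rw [hfilter m hm], ih,
      orderedProd_insert_of_forall_lt T ha]
    noncomm_ring

theorem sum_orderedProd_Ioo_mul_one_sub (i j : Fin n) :
    ∑ m ∈ Finset.Ioo i j, orderedProd T (Finset.Ioo i m) * (1 - T m) =
      1 - orderedProd T (Finset.Ioo i j) := by
  rw [← sum_orderedProd_filter_lt_mul_one_sub T]
  refine Finset.sum_congr rfl fun m hm => ?_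
  rw [Finset.Ioo_filter_lt, min_eq_right (Finset.mem_Ioo.mp hm).2.le]

theorem sum_orderedProd_Ioi_mul_one_sub (i : Fin n) :
    ∑ m ∈ Finset.Ioi i, orderedProd T (Finset.Ioo i m) * (1 - T m) =
      1 - orderedProd T (Finset.Ioi i) := by
  rw [← sum_orderedProd_filter_lt_mul_one_sub T]
  refine Finset.sum_congr rfl fun m _ => ?_
  congr 2
  ext l
  simp

end OrderedProd

section Stokes

omit [FiniteDimensional k Ψ] [∀ i, FiniteDimensional k (Φ i)]

variable (u : ∀ i, Ψ →ₗ[k] Φ i) (v : ∀ i, Φ i →ₗ[k] Ψ)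

theorem sum_orderedProd_quiverT_Ioo_apply (i j : Fin n) (y : Ψ) :
    ∑ m ∈ Finset.Ioo i j, orderedProd (quiverT u v) (Finset.Ioo i m) (v m (u m y)) =
      y - orderedProd (quiverT u v) (Finset.Ioo i j) y := by
  simpa [quiverT] using congr($(sum_orderedProd_Ioo_mul_one_sub (quiverT u v) i j) y)

theorem sum_orderedProd_quiverT_Ioi_apply (i : Fin n) (y : Ψ) :
    ∑ m ∈ Finset.Ioi i, orderedProd (quiverT u v) (Finset.Ioo i m) (v m (u m y)) =
      y - orderedProd (quiverT u v) (Finset.Ioi i) y := by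
  simpa [quiverT] using congr($(sum_orderedProd_Ioi_mul_one_sub (quiverT u v) i) y)

theorem Sbeta_apply (f : ∀ i, Φ i) (i : Fin n) :
    Sbeta u v f i = f i + ∑ m ∈ Finset.Ioi i, u i (v m (f m)) := by
  simp [Sbeta, ← Finset.sum_filter, Finset.filter_lt_eq_Ioi]

theorem SbetaInv_apply (f : ∀ i, Φ i) (i : Fin n) :
    SbetaInv u v f i =
      f i - ∑ m ∈ Finset.Ioi i, u i (orderedProd (quiverT u v) (Finset.Ioo i m) (v m (f m))) := by
  simp [SbetaInv, ← Finset.sum_filter, Finset.filter_lt_eq_Ioi]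

theorem Sminus_apply (f : ∀ i, Φ i) (i : Fin n) :
    Sminus u v f i = f i - ∑ m ∈ Finset.Iic i, u i (v m (f m)) := by
  simp [Sminus, ← Finset.sum_filter, Finset.filter_gt_eq_Iio, ← Finset.Iio_insert]
  abel

theorem Sbeta_single_apply (j : Fin n) (x : Φ j) (i : Fin n) :
    Sbeta u v (Pi.single j x) i = Pi.single j x i + if i < j then u i (v j x) else 0 := by
  rw [Sbeta_apply, sum_apply_pi_single _ (fun m y => u i (v m y)) (fun m => by simp)]
  simp only [Finset.mem_Ioi]

theorem Sminus_single_apply (j : Fin n) (x : Φ j) (i : Fin n) :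
    Sminus u v (Pi.single j x) i = Pi.single j x i - if j ≤ i then u i (v j x) else 0 := by
  rw [Sminus_apply, sum_apply_pi_single _ (fun m y => u i (v m y)) (fun m => by simp)]
  simp only [Finset.mem_Iic]

theorem sum_orderedProd_quiverT_ite_lt (i j : Fin n) (y : Ψ) :
    ∑ m ∈ Finset.Ioi i,
        orderedProd (quiverT u v) (Finset.Ioo i m) (v m (if m < j then u m y else 0)) =
      y - orderedProd (quiverT u v) (Finset.Ioo i j) y := by
  have hIoo : (Finset.Ioi i).filter (· < j) = Finset.Ioo i j := by
    ext m
    simp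
  rw [← sum_orderedProd_quiverT_Ioo_apply, ← hIoo, Finset.sum_filter]
  refine Finset.sum_congr rfl fun m _ => ?_
  split_ifs <;> simp

theorem sum_orderedProd_quiverT_ite_le (i j : Fin n) (y : Ψ) :
    ∑ m ∈ Finset.Ioi i,
        orderedProd (quiverT u v) (Finset.Ioo i m) (v m (if j ≤ m then u m y else 0)) =
      orderedProd (quiverT u v) (Finset.Ioo i j) y -
        orderedProd (quiverT u v) (Finset.Ioi i) y := by
  rw [← sub_sub_sub_cancel_left _ _ y, ← sum_orderedProd_quiverT_Ioi_apply,
    ← sum_orderedProd_quiverT_ite_lt, ← Finset.sum_sub_distrib]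
  refine Finset.sum_congr rfl fun m _ => ?_
  by_cases hjm : j ≤ m
  · simp [hjm, not_lt.mpr hjm]
  · simp [hjm, not_le.mp hjm]

theorem SbetaInv_Sbeta_single_apply (j : Fin n) (x : Φ j) (i : Fin n) :
    SbetaInv u v (Sbeta u v (Pi.single j x)) i = Pi.single j x i := by
  have hsum : ∑ m ∈ Finset.Ioi i, u i (orderedProd (quiverT u v) (Finset.Ioo i m)
        (v m (Sbeta u v (Pi.single j x) m))) =
      (if i < j then u i (orderedProd (quiverT u v) (Finset.Ioo i j) (v j x)) else 0) +
        u i (v j x - orderedProd (quiverT u v) (Finset.Ioo i j) (v j x)) := by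
    simp only [Sbeta_single_apply, map_add, Finset.sum_add_distrib]
    rw [sum_apply_pi_single _ (fun m y => u i (orderedProd (quiverT u v) (Finset.Ioo i m) (v m y)))
      (fun m => by simp), ← map_sum, sum_orderedProd_quiverT_ite_lt]
    simp only [Finset.mem_Ioi]
  rw [SbetaInv_apply, Sbeta_single_apply, hsum]
  by_cases hij : i < j
  · simp only [hij, if_true, map_sub]
    abel
  · simp [hij, orderedProd_empty]

theorem SbetaInv_Sminus_single_apply (j : Fin n) (x : Φ j) (i : Fin n) :
    SbetaInv u v (Sminus u v (Pi.single j x)) i =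
      Pi.single j x i - u i (orderedProd (quiverT u v) (Finset.Ioi i) (v j x)) := by
  have hsum : ∑ m ∈ Finset.Ioi i, u i (orderedProd (quiverT u v) (Finset.Ioo i m)
        (v m (Sminus u v (Pi.single j x) m))) =
      (if i < j then u i (orderedProd (quiverT u v) (Finset.Ioo i j) (v j x)) else 0) -
        u i (orderedProd (quiverT u v) (Finset.Ioo i j) (v j x) -
          orderedProd (quiverT u v) (Finset.Ioi i) (v j x)) := by
    simp only [Sminus_single_apply, map_sub, Finset.sum_sub_distrib]
    rw [sum_apply_pi_single _ (fun m y => u i (orderedProd (quiverT u v) (Finset.Ioo i m) (v m y)))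
      (fun m => by simp), ← map_sum, sum_orderedProd_quiverT_ite_le]
    simp only [Finset.mem_Ioi, map_sub]
  rw [SbetaInv_apply, Sminus_single_apply, hsum]
  by_cases hij : i < j
  · simp only [hij, not_le.mpr hij, if_true, if_false, map_sub]
    abel
  · simp [hij, not_lt.mp hij, orderedProd_empty]

theorem SbetaInv_mul_Sbeta : SbetaInv u v * Sbeta u v = 1 :=
  LinearMap.pi_ext fun j x => funext fun i => SbetaInv_Sbeta_single_apply u v j x i

end Stokes

/-- The `(i,j)` block is read off by applying the composite to an element supported in the
`j`-th summand and projecting to the `i`-th summand. -/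
theorem stmt_3 (u : ∀ i, Ψ →ₗ[k] Φ i) (v : ∀ i, Φ i →ₗ[k] Ψ) :
    IsUnit (Sbeta u v) ∧
      ∀ (j : Fin n) (x : Φ j) (i : Fin n),
        (Ring.inverse (Sbeta u v) * Sminus u v) (Pi.single j x) i =
          Pi.single j x i - u i ((orderedProd (quiverT u v) (Finset.Ioi i)) (v j x)) := by
  have hleft := SbetaInv_mul_Sbeta u v
  have hunit : IsUnit (Sbeta u v) := IsUnit.of_mul_eq_one_right _ hleft
  have hinv : Ring.inverse (Sbeta u v) = SbetaInv u v :=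
    (Ring.inverse_of_isUnit hunit).trans (Units.inv_eq_of_mul_eq_one_left hleft)
  refine ⟨hunit, fun j x i => ?_⟩
  rw [hinv, Module.End.mul_apply, SbetaInv_Sminus_single_apply]
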